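/- Let γ = 2^k for some integer k, and let I be a 4γ-underallocated instance of unit tasks (i.e., there is an allocation of pairwise non-overlapping slots of length 4γ, one inside each window). Let J be the instance obtained from I by replacing each window with a largest aligned subinterval of itself. Then J is γ-underallocated: there is an allocation of pairwise non-overlapping slots of length γ, one inside each (aligned) window of J. -/
import Mathlib

/-- An interval `[x, y]` is aligned iff `x = a·2^m` and `y = (a+1)·2^m` for
    some integers `m, a`. -/
def AlignedInterval (x y : ℝ) : Prop :=
  ∃ m a : ℤ, x = (a : ℝ) * 2 ^ m ∧ y = ((a : ℝ) + 1) * 2 ^ m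

/-- Two dyadic intervals (in integer cell units) are nested or disjoint. -/
lemma dyadic_cases (e e0 : ℕ) (he : e ≤ e0) (c c0 : ℤ)
    (h : (2:ℤ)^e ∣ c) (h0 : (2:ℤ)^e0 ∣ c0) :
    (c0 ≤ c ∧ c + 2^e ≤ c0 + 2^e0) ∨ c + 2^e ≤ c0 ∨ c0 + 2^e0 ≤ c := by
  obtain ⟨a, rfl⟩ := h
  obtain ⟨a0, rfl⟩ := h0
  obtain ⟨d, rfl⟩ := Nat.exists_eq_add_of_le he
  have hp : (0:ℤ) < 2^e := pow_pos (by norm_num) e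
  rcases lt_or_ge a (2^d * a0) with hlt | hge
  · right; left
    have h1 : a + 1 ≤ 2^d * a0 := hlt
    have := mul_le_mul_of_nonneg_left h1 hp.le
    rw [pow_add]
    nlinarith
  rcases lt_or_ge a (2^d * (a0 + 1)) with hlt2 | hge2
  · left
    have h1 : a + 1 ≤ 2^d * (a0 + 1) := hlt2
    have h2 := mul_le_mul_of_nonneg_left h1 hp.le
    have h3 := mul_le_mul_of_nonneg_left hge hp.le
    rw [pow_add]
    constructor <;> nlinarith
  · right; right
    have h2 := mul_le_mul_of_nonneg_left hge2 hp.le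
    rw [pow_add]
    nlinarith

/-- Alignment Reduction.  Let `γ = 2^k` (k ∈ ℤ) and let `I` be an instance
    with windows `W i` that is `4γ`-underallocated: there are pairwise
    non-overlapping slots of length `4γ`, one inside each window.  Replace
    each window by a largest aligned subinterval `A i` of itself.  Then the
    aligned instance is `γ`-underallocated. -/
theorem alignment_reduction (k : ℤ) (γ : ℝ) (hγ : γ = 2 ^ k)
    (n : ℕ) (W A : Fin n → ℝ × ℝ)
    (hAaligned : ∀ i, AlignedInterval (A i).1 (A i).2)
    (hAsub : ∀ i, (W i).1 ≤ (A i).1 ∧ (A i).2 ≤ (W i).2)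
    (hAmax : ∀ i, ∀ b₁ b₂ : ℝ, AlignedInterval b₁ b₂ →
      (W i).1 ≤ b₁ → b₂ ≤ (W i).2 → b₂ - b₁ ≤ (A i).2 - (A i).1)
    (hunder : ∃ S : Fin n → ℝ,
      (∀ i, (W i).1 ≤ S i ∧ S i + 4 * γ ≤ (W i).2) ∧
      (∀ i j, i ≠ j → S i + 4 * γ ≤ S j ∨ S j + 4 * γ ≤ S i)) :
    ∃ S' : Fin n → ℝ,
      (∀ i, (A i).1 ≤ S' i ∧ S' i + γ ≤ (A i).2) ∧
      (∀ i j, i ≠ j → S' i + γ ≤ S' j ∨ S' j + γ ≤ S' i) := by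
  classical
  have h2ne : (2:ℝ) ≠ 0 := by norm_num
  have hγ0 : (0:ℝ) < γ := hγ ▸ zpow_pos (by norm_num) k
  obtain ⟨S, hSin, hSdis⟩ := hunder
  -- Each aligned window has the form [c·γ, (c + 2^E)·γ] with E ≥ 1 and 2^E ∣ c.
  have main : ∀ i, ∃ (E : ℕ) (C : ℤ), 1 ≤ E ∧ (2:ℤ)^E ∣ C ∧
      (A i).1 = (C:ℝ) * γ ∧ (A i).2 = ((C:ℝ) + 2^E) * γ := by
    intro i
    obtain ⟨m, a, h1, h2⟩ := hAaligned i
    have hd : (A i).2 - (A i).1 = 2^m := by rw [h1, h2]; ring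
    have hγ2 : (0:ℝ) < 2*γ := by linarith
    have hpe : (2:ℝ)^(k+1) = 2*γ := by rw [zpow_add_one₀ h2ne, hγ]; ring
    set b : ℤ := ⌈S i / (2*γ)⌉ with hb_def
    have hb1 : S i ≤ (b:ℝ) * (2*γ) := by
      have := Int.le_ceil (S i / (2*γ))
      calc S i = (S i / (2*γ)) * (2*γ) := by field_simp
        _ ≤ (b:ℝ) * (2*γ) := by
            apply mul_le_mul_of_nonneg_right this hγ2.le
    have hb2 : (b:ℝ) * (2*γ) < S i + 2*γ := by
      have h := Int.ceil_lt_add_one (S i / (2*γ))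
      have := mul_lt_mul_of_pos_right h hγ2
      calc (b:ℝ) * (2*γ) < (S i / (2*γ) + 1) * (2*γ) := this
        _ = S i + 2*γ := by field_simp
    have halig : AlignedInterval ((b:ℝ)*2^(k+1)) (((b:ℝ)+1)*2^(k+1)) := ⟨k+1, b, rfl, rfl⟩
    have hmax := hAmax i _ _ halig
      (by rw [hpe]; linarith [(hSin i).1])
      (by rw [hpe]; linarith [(hSin i).2])
    have h2γm : (2:ℝ)^(k+1) ≤ 2^m := by
      have he : ((b:ℝ)+1)*2^(k+1) - (b:ℝ)*2^(k+1) = 2^(k+1) := by ring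
      rw [he, hd] at hmax; exact hmax
    have hkm : k+1 ≤ m := by
      by_contra hc
      push_neg at hc
      have := zpow_lt_zpow_right₀ (by norm_num : (1:ℝ) < 2) hc
      linarith
    set E : ℕ := (m - (k+1)).toNat + 1 with hE_def
    have hmE : m = k + (E:ℤ) := by
      have := Int.toNat_of_nonneg (by omega : (0:ℤ) ≤ m - (k+1))
      push_cast [hE_def]
      omega
    have hpm : (2:ℝ)^m = 2^E * γ := by
      rw [hmE, hγ, zpow_add₀ h2ne, zpow_natCast]; ring
    refine ⟨E, a * 2^E, by omega, Dvd.intro_left a rfl, ?_, ?_⟩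
    · rw [h1, hpm]; push_cast; ring
    · rw [h2, hpm]; push_cast; ring
  choose e c hE1 hdvd hC1 hC2 using main
  -- The "no long aligned subinterval" principle, in cell units.
  have blockedE : ∀ (i : Fin n) (z : ℤ) (E : ℕ),
      (W i).1 ≤ ((z * 2^E : ℤ):ℝ) * γ → (((z+1) * 2^E : ℤ):ℝ) * γ ≤ (W i).2 →
      E ≤ e i := by
    intro i z E h1 h2
    have hpe : ∀ w : ℤ, ((w * 2^E : ℤ):ℝ) * γ = (w:ℝ) * 2^(k + (E:ℤ)) := by
      intro w
      rw [zpow_add₀ h2ne, zpow_natCast, hγ]; push_cast; ring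
    have halig : AlignedInterval ((z:ℝ)*2^(k+(E:ℤ))) (((z:ℝ)+1)*2^(k+(E:ℤ))) :=
      ⟨k+(E:ℤ), z, rfl, rfl⟩
    have hmax := hAmax i _ _ halig (by rw [← hpe]; exact h1)
      (by rw [show ((z:ℝ)+1) = (((z+1:ℤ)):ℝ) by push_cast; ring, ← hpe]; exact h2)
    have hlen : (A i).2 - (A i).1 = (2:ℝ)^(e i) * γ := by
      rw [hC1, hC2]; ring
    have he2 : ((z:ℝ)+1)*2^(k+(E:ℤ)) - (z:ℝ)*2^(k+(E:ℤ)) = 2^E * γ := by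
      have : (2:ℝ)^(k+(E:ℤ)) = 2^E * γ := by
        rw [zpow_add₀ h2ne, zpow_natCast, hγ]; ring
      rw [this]; ring
    rw [he2, hlen] at hmax
    have hle : (2:ℝ)^E ≤ 2^(e i) := by
      have := mul_le_mul_of_nonneg_right hmax (le_of_lt (inv_pos.mpr hγ0))
      rw [mul_assoc, mul_assoc, mul_inv_cancel₀ (ne_of_gt hγ0), mul_one, mul_one] at this
      exact this
    exact (pow_le_pow_iff_right₀ (by norm_num)).mp hle
  -- offset of the enclosing "safe zone" for each aligned interval
  set p : Fin n → ℤ := fun i => if (2:ℤ)^(e i + 1) ∣ c i then c i - 2^(e i + 1) else c i - 2^(e i)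
    with hp_def
  have hNpos : ∀ i, (0:ℤ) < 2^(e i) := fun i => pow_pos (by norm_num) (e i)
  have hp_le : ∀ i, p i ≤ c i - 2^(e i) := by
    intro i
    by_cases h : (2:ℤ)^(e i + 1) ∣ c i <;> simp only [hp_def, h, if_true, if_false]
    · have : (2:ℤ)^(e i + 1) = 2 * 2^(e i) := by ring
      have := hNpos i; omega
    · omega
  have hp_ge : ∀ i, c i + 2*2^(e i) ≤ p i + 4*2^(e i) := by
    intro i
    by_cases h : (2:ℤ)^(e i + 1) ∣ c i <;> simp only [hp_def, h, if_true, if_false]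
    · have h2 : (2:ℤ)^(e i + 1) = 2 * 2^(e i) := by ring
      omega
    · have := hNpos i; omega
  -- The crucial geometric fact: every slot of a task whose aligned window is contained
  -- in the aligned window of i0 lies in the safe zone of i0.
  have key : ∀ i0 i : Fin n, c i0 ≤ c i → c i + 2^(e i) ≤ c i0 + 2^(e i0) →
      (p i0 : ℝ) * γ ≤ S i ∧ S i + 4*γ ≤ ((p i0 : ℝ) + 4*2^(e i0)) * γ := by
    intro i0 i h1 h2
    have mulγ : ∀ {x y : ℤ}, x ≤ y → (x:ℝ)*γ ≤ (y:ℝ)*γ := fun hxy =>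
      mul_le_mul_of_nonneg_right (by exact_mod_cast hxy) hγ0.le
    have hWA1 : (W i).1 ≤ (c i : ℝ)*γ := by rw [← hC1 i]; exact (hAsub i).1
    have hWA2 : ((c i:ℝ) + 2^(e i))*γ ≤ (W i).2 := by rw [← hC2 i]; exact (hAsub i).2
    have hNγ : (0:ℝ) ≤ 2^(e i)*γ := mul_nonneg (pow_nonneg (by norm_num) _) hγ0.le
    have hNγ0 : (0:ℝ) ≤ 2^(e i0)*γ := mul_nonneg (pow_nonneg (by norm_num) _) hγ0.le
    have hEle : e i ≤ e i0 := by
      have hple : (2:ℤ)^(e i) ≤ 2^(e i0) := by linarith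
      exact (pow_le_pow_iff_right₀ (by norm_num)).mp hple
    rcases eq_or_lt_of_le hEle with heq | hlt
    · -- the two aligned intervals coincide
      have hpe2 : (2:ℤ)^(e i) = 2^(e i0) := by rw [heq]
      have hceq : c i = c i0 := le_antisymm (by linarith) h1
      by_cases hpar : (2:ℤ)^(e i0 + 1) ∣ c i0
      · -- "even" case
        have hpval : p i0 = c i0 - 2^(e i0 + 1) := by simp only [hp_def, if_pos hpar]
        obtain ⟨b, hb⟩ := hpar
        constructor
        · by_contra hcon
          push_neg at hcon
          rw [hpval] at hcon
          push_cast at hcon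
          have hblk := blockedE i (b-1) (e i0 + 1)
            (by
              have hz : (b - 1) * 2^(e i0 + 1) = c i0 - 2^(e i0 + 1) := by rw [hb]; ring
              rw [hz]; push_cast
              linarith [(hSin i).1])
            (by
              have hz : (b - 1 + 1) * 2^(e i0 + 1) = c i := by rw [hceq, hb]; ring
              rw [hz]
              linarith [hWA2, hNγ])
          omega
        · by_contra hcon
          push_neg at hcon
          rw [hpval] at hcon
          push_cast at hcon
          have hblk := blockedE i b (e i0 + 1)
            (by
              have hz : b * 2^(e i0 + 1) = c i := by rw [hceq, hb]; ring
              rw [hz]; exact hWA1)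
            (by
              have hz : (b + 1) * 2^(e i0 + 1) = c i0 + 2^(e i0 + 1) := by rw [hb]; ring
              rw [hz]; push_cast
              have hps : (2:ℝ)^(e i0 + 1) = 2*2^(e i0) := by ring
              rw [hps] at hcon ⊢
              linarith [(hSin i).2])
          omega
      · -- "odd" case
        have hpval : p i0 = c i0 - 2^(e i0) := by simp only [hp_def, if_neg hpar]
        obtain ⟨a0, ha0⟩ := hdvd i0
        have hex : ∃ b:ℤ, c i0 - 2^(e i0) = 2^(e i0 + 1) * b := by
          rcases Int.even_or_odd a0 with ⟨t, ht⟩ | ⟨t, ht⟩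
          · exact absurd ⟨t, by rw [ha0, ht]; ring⟩ hpar
          · exact ⟨t, by rw [ha0, ht]; ring⟩
        obtain ⟨b, hb⟩ := hex
        constructor
        · by_contra hcon
          push_neg at hcon
          rw [hpval] at hcon
          push_cast at hcon
          have hblk := blockedE i b (e i0 + 1)
            (by
              have hz : b * 2^(e i0 + 1) = c i0 - 2^(e i0) := by rw [hb]; ring
              rw [hz]; push_cast
              linarith [(hSin i).1])
            (by
              have hz : (b + 1) * 2^(e i0 + 1) = c i + 2^(e i) := by
                rw [hceq, hpe2]
                rw [show (b + 1) * 2^(e i0 + 1) = (c i0 - 2^(e i0)) + 2^(e i0 + 1) from by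
                  rw [hb]; ring]
                ring
              rw [hz]
              have hc2 : ((c i + 2^(e i) : ℤ):ℝ) * γ = ((c i : ℝ) + 2^(e i)) * γ := by
                push_cast; ring
              rw [hc2]
              linarith [hWA2])
          omega
        · by_contra hcon
          push_neg at hcon
          rw [hpval] at hcon
          push_cast at hcon
          have hblk := blockedE i (b+1) (e i0 + 1)
            (by
              have hz : (b + 1) * 2^(e i0 + 1) = c i0 + 2^(e i0) := by
                have : (b + 1) * 2^(e i0 + 1) = (c i0 - 2^(e i0)) + 2^(e i0 + 1) := by
                  rw [hb]; ring
                rw [this]; ring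
              rw [hz]; push_cast
              have := mulγ h1.ge.le
              have hcc : (W i).1 ≤ (c i0 : ℝ)*γ := by rw [← hceq]; exact hWA1
              nlinarith [pow_nonneg (by norm_num : (0:ℝ) ≤ 2) (e i0)]
            )
            (by
              have hz : (b + 1 + 1) * 2^(e i0 + 1) = c i0 + 3 * 2^(e i0) := by
                have : (b + 1 + 1) * 2^(e i0 + 1) = (c i0 - 2^(e i0)) + 2 * 2^(e i0 + 1) := by
                  rw [hb]; ring
                rw [this]; ring
              rw [hz]; push_cast
              linarith [(hSin i).2])
          omega
    · -- strictly smaller aligned interval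
      obtain ⟨a0, ha0⟩ := hdvd i0
      constructor
      · have hstep : ((c i0 - 2^(e i0) : ℤ):ℝ)*γ ≤ S i := by
          by_contra hcon
          push_neg at hcon
          have hblk := blockedE i (a0 - 1) (e i0)
            (by
              have hz : (a0 - 1) * 2^(e i0) = c i0 - 2^(e i0) := by
                rw [show (a0 - 1) * 2^(e i0) = 2^(e i0) * a0 - 2^(e i0) from by ring, ← ha0]
              rw [hz]
              linarith [(hSin i).1])
            (by
              have hz : (a0 - 1 + 1) * 2^(e i0) = c i0 := by
                rw [show (a0 - 1 + 1) * 2^(e i0) = 2^(e i0) * a0 from by ring, ← ha0]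
              rw [hz]
              have hcc := mulγ h1
              linarith [hWA2, hNγ])
          omega
        have := mulγ (hp_le i0)
        push_cast at this hstep
        linarith
      · have hstep : S i + 4*γ ≤ ((c i0 + 2 * 2^(e i0) : ℤ):ℝ)*γ := by
          by_contra hcon
          push_neg at hcon
          have hblk := blockedE i (a0 + 1) (e i0)
            (by
              have hz : (a0 + 1) * 2^(e i0) = c i0 + 2^(e i0) := by
                rw [show (a0 + 1) * 2^(e i0) = 2^(e i0) * a0 + 2^(e i0) from by ring, ← ha0]
              rw [hz]
              have hcc := mulγ (show c i ≤ c i0 + 2^(e i0) from by linarith [hNpos i])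
              push_cast
              push_cast at hcc
              linarith [hWA1])
            (by
              have hz : (a0 + 1 + 1) * 2^(e i0) = c i0 + 2 * 2^(e i0) := by
                rw [show (a0 + 1 + 1) * 2^(e i0) = 2^(e i0) * a0 + 2 * 2^(e i0) from by ring, ← ha0]
              rw [hz]
              linarith [(hSin i).2])
          omega
        have := mulγ (hp_ge i0)
        push_cast at this hstep
        linarith
  -- Hall condition
  set cells : Fin n → Finset ℤ := fun i => Finset.Ico (c i) (c i + 2^(e i)) with hcells_def
  have hall : ∀ T : Finset (Fin n), T.card ≤ (T.biUnion cells).card := by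
    intro T
    induction T using Finset.strongInduction with
    | _ T IH =>
    rcases T.eq_empty_or_nonempty with rfl | hne
    · simp
    obtain ⟨i0, hi0T, hmax⟩ := T.exists_max_image (fun i => e i) hne
    set T1 := T.filter (fun i => c i0 ≤ c i ∧ c i + 2^(e i) ≤ c i0 + 2^(e i0)) with hT1_def
    set T2 := T \ T1 with hT2_def
    have hi0T1 : i0 ∈ T1 := by
      simp only [hT1_def, Finset.mem_filter]
      exact ⟨hi0T, le_refl _, le_refl _⟩
    have hT2ss : T2 ⊂ T := by
      refine Finset.ssubset_iff_of_subset (Finset.sdiff_subset) |>.mpr ⟨i0, hi0T, ?_⟩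
      simp [hT2_def, hi0T1]
    have hdisj2 : ∀ i ∈ T2, c i + 2^(e i) ≤ c i0 ∨ c i0 + 2^(e i0) ≤ c i := by
      intro i hi
      simp only [hT2_def, Finset.mem_sdiff, hT1_def, Finset.mem_filter, not_and] at hi
      obtain ⟨hiT, hnot⟩ := hi
      rcases dyadic_cases (e i) (e i0) (hmax i hiT) (c i) (c i0) (hdvd i) (hdvd i0) with
        ⟨ha, hb⟩ | hd | hd
      · exact absurd hb (hnot hiT ha)
      · exact Or.inl hd
      · exact Or.inr hd
    have hT1cells : T1.biUnion cells = cells i0 := by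
      ext x
      simp only [Finset.mem_biUnion, hcells_def, Finset.mem_Ico]
      constructor
      · rintro ⟨i, hi, hx1, hx2⟩
        simp only [hT1_def, Finset.mem_filter] at hi
        exact ⟨le_trans hi.2.1 hx1, lt_of_lt_of_le hx2 hi.2.2⟩
      · intro hx
        exact ⟨i0, hi0T1, hx.1, hx.2⟩
    have hcard1 : T1.card ≤ (cells i0).card := by
      have hinj : Set.InjOn (fun i => ⌊(S i - (p i0 : ℝ)*γ)/(4*γ)⌋) T1 := by
        intro i hi j hj hij
        by_contra hne'
        have h4γ : (0:ℝ) < 4*γ := by linarith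
        simp only [hT1_def, Finset.coe_filter, Set.mem_setOf_eq] at hi hj
        obtain ⟨hi1, hi2⟩ := key i0 i hi.2.1 hi.2.2
        obtain ⟨hj1, hj2⟩ := key i0 j hj.2.1 hj.2.2
        have hij' : ⌊(S i - (p i0 : ℝ)*γ)/(4*γ)⌋ = ⌊(S j - (p i0 : ℝ)*γ)/(4*γ)⌋ := hij
        have e1 := Int.floor_le ((S i - (p i0 : ℝ)*γ)/(4*γ))
        have e2 := Int.lt_floor_add_one ((S i - (p i0 : ℝ)*γ)/(4*γ))
        have e3 := Int.floor_le ((S j - (p i0 : ℝ)*γ)/(4*γ))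
        have e4 := Int.lt_floor_add_one ((S j - (p i0 : ℝ)*γ)/(4*γ))
        rw [← hij'] at e3 e4
        have f1 := mul_le_mul_of_nonneg_right e1 h4γ.le
        have f2 := mul_lt_mul_of_pos_right e2 h4γ
        have f3 := mul_le_mul_of_nonneg_right e3 h4γ.le
        have f4 := mul_lt_mul_of_pos_right e4 h4γ
        rw [div_mul_cancel₀ _ (ne_of_gt h4γ)] at f1 f2 f3 f4
        rcases hSdis i j hne' with h | h <;> linarith
      have hmapsto : ∀ i ∈ T1, ⌊(S i - (p i0 : ℝ)*γ)/(4*γ)⌋ ∈ Finset.Ico (0:ℤ) (2^(e i0)) := by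
        intro i hi
        simp only [hT1_def, Finset.mem_filter] at hi
        obtain ⟨h1, h2⟩ := key i0 i hi.2.1 hi.2.2
        have h4γ : (0:ℝ) < 4*γ := by linarith
        rw [Finset.mem_Ico]
        constructor
        · exact Int.floor_nonneg.mpr (div_nonneg (by linarith) h4γ.le)
        · apply Int.floor_lt.mpr
          rw [div_lt_iff₀ h4γ]
          push_cast
          nlinarith
      have := Finset.card_le_card_of_injOn _ hmapsto hinj
      calc T1.card ≤ (Finset.Ico (0:ℤ) (2^(e i0))).card := this
        _ = (cells i0).card := by
            simp only [hcells_def, Int.card_Ico]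
            congr 1
            omega
    have hTsplit : T = T1 ∪ T2 := by
      rw [hT2_def, Finset.union_sdiff_of_subset (Finset.filter_subset _ _)]
    have hdisjcells : Disjoint (cells i0) (T2.biUnion cells) := by
      rw [Finset.disjoint_left]
      intro x hx hx2
      rw [Finset.mem_biUnion] at hx2
      obtain ⟨i, hi, hxi⟩ := hx2
      simp only [hcells_def, Finset.mem_Ico] at hx hxi
      rcases hdisj2 i hi with h | h <;> omega
    calc T.card ≤ T1.card + T2.card := by rw [hTsplit]; exact Finset.card_union_le _ _
      _ ≤ (cells i0).card + (T2.biUnion cells).card := by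
          have := IH T2 hT2ss
          omega
      _ = ((cells i0) ∪ T2.biUnion cells).card := (Finset.card_union_of_disjoint hdisjcells).symm
      _ ≤ (T.biUnion cells).card := by
          apply Finset.card_le_card
          rw [← hT1cells]
          apply Finset.union_subset <;>
            exact Finset.biUnion_subset_biUnion_of_subset_left _
              (by rw [hTsplit]; simp [Finset.subset_union_left, Finset.subset_union_right])
  obtain ⟨f, hfinj, hfmem⟩ := (Finset.all_card_le_biUnion_card_iff_exists_injective cells).mp hall
  refine ⟨fun i => (f i : ℝ) * γ, fun i => ?_, fun i j hij => ?_⟩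
  · have hm := hfmem i
    simp only [hcells_def, Finset.mem_Ico] at hm
    have hm1 : ((c i : ℤ):ℝ) ≤ (f i : ℝ) := by exact_mod_cast hm.1
    have hm2 : ((f i : ℝ) + 1) ≤ (c i : ℝ) + 2^(e i) := by
      have h := hm.2
      have h' : f i + 1 ≤ c i + 2^(e i) := h
      exact_mod_cast h'
    constructor
    · rw [hC1 i]
      exact mul_le_mul_of_nonneg_right hm1 hγ0.le
    · rw [hC2 i]
      have hmul := mul_le_mul_of_nonneg_right hm2 hγ0.le
      show (f i : ℝ) * γ + γ ≤ ((c i : ℝ) + 2^(e i)) * γ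
      nlinarith
  · have hne := hfinj.ne hij
    rcases lt_or_gt_of_ne hne with h | h
    · left
      have h' : ((f i : ℝ) + 1) ≤ (f j : ℝ) := by exact_mod_cast Int.lt_iff_add_one_le.mp h
      have hmul := mul_le_mul_of_nonneg_right h' hγ0.le
      show (f i : ℝ) * γ + γ ≤ (f j : ℝ) * γ
      nlinarith
    · right
      have h' : ((f j : ℝ) + 1) ≤ (f i : ℝ) := by exact_mod_cast Int.lt_iff_add_one_le.mp h
      have hmul := mul_le_mul_of_nonneg_right h' hγ0.le
      show (f j : ℝ) * γ + γ ≤ (f i : ℝ) * γ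
      nlinarith
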